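/- Let n ∈ ℕ, α ∈ (0,1), and let γ₁, γ₂ be reals with 0 < γ₂ < γ₁. Set d = n^{1−γ₂}, ε = n^{−γ₁}, a = ⌊(1−α)n − d⌋, â = ⌊a − d⌋ and s = ⌊n(1−α)⌋, and assume 1 ≤ a ≤ n and 1 ≤ s ≤ n. Let (w_j)_{j=1}^n and (u_j)_{j=1}^n be families of nonnegative real numbers, each family having pairwise distinct values, and let L ⊆ {1,…,n} with #L < d. Assume: (i) |u_j − w_j| < ε/2 for every j ∉ L; and (ii) for every j, if r(w_j) ≤ a − d then w_{(a)} − w_j ≥ ε. Then {j : r(w_j) ≤ â} \ L ⊆ {j : u_j < u_{(s)}}. (This is the pathwise content of the global filtering inclusion (300217-1): on the event Ω_n, every index selected by the Brownian rank filter and containing no jump survives the global jump filter J_n(α).) -/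

import Mathlib

open Finset

/-- The rank of `w k` among the family `(w k')_{k'}`:
the number of indices `k'` with `w k' ≤ w k`. -/
noncomputable def rank {n : ℕ} (w : Fin n → ℝ) (k : Fin n) : ℕ :=
  (Finset.univ.filter fun k' => w k' ≤ w k).card

/-- The `r`-th order statistic (the `r`-th smallest value) of the family `w`.
For a family with pairwise distinct values, this is the unique value of rank `r`. -/
noncomputable def orderStat {n : ℕ} (w : Fin n → ℝ) (r : ℕ) : ℝ :=
  if h : ∃ k, rank w k = r then w h.choose else 0

/-!
Let `k` be the index of `w`-rank `a`, and `c = w k - ε / 2`. A selected index `j` has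
`w j ≤ w k - ε`, so `u j < c` when `j ∉ L`. Conversely, an index `x ∉ L` with `u x ≤ c` has
`w x < w k`, so at most `(a - 1) + #L` indices have `u x ≤ c`; this is less than `s` because
`a + #L < a + d ≤ (1 - α) n < s + 1`. Hence the value of `u`-rank `s` exceeds `c`, and so `u j`.
-/

section Rank

variable {n : ℕ} {w : Fin n → ℝ}

variable (w) in
lemma card_filter_lt_lt_rank (k : Fin n) :
    #{x | w x < w k} < rank w k := by
  refine card_lt_card (ssubset_iff_of_subset ?_ |>.2 ⟨k, by simp, by simp⟩)
  exact monotone_filter_right _ fun _ _ hx => hx.le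

lemma rank_lt_rank {j k : Fin n} (h : w j < w k) : rank w j < rank w k :=
  (card_le_card (monotone_filter_right _ fun _ _ hx => lt_of_le_of_lt hx h)).trans_lt
    (card_filter_lt_lt_rank w k)

lemma rank_injective (hw : Function.Injective w) : Function.Injective (rank w) := by
  intro j k h
  rcases lt_trichotomy (w j) (w k) with hlt | heq | hgt
  · exact absurd h (rank_lt_rank hlt).ne
  · exact hw heq
  · exact absurd h (rank_lt_rank hgt).ne'

variable (w) in
lemma rank_mem_Icc (k : Fin n) : rank w k ∈ Icc 1 n := by
  refine mem_Icc.2 ⟨card_pos.2 ⟨k, by simp⟩, ?_⟩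
  exact (card_filter_le _ _).trans_eq (card_fin n)

lemma image_rank (hw : Function.Injective w) : univ.image (rank w) = Icc 1 n := by
  refine eq_of_subset_of_card_le (fun r hr => ?_) ?_
  · obtain ⟨k, -, rfl⟩ := mem_image.1 hr
    exact rank_mem_Icc w k
  · simp [card_image_of_injective _ (rank_injective hw)]

lemma exists_rank_eq (hw : Function.Injective w) {r : ℕ} (hr : r ∈ Icc 1 n) :
    ∃ k, rank w k = r := by
  rw [← image_rank hw] at hr
  simpa using hr

lemma orderStat_eq_of_rank_eq (hw : Function.Injective w) {k : Fin n} {r : ℕ}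
    (h : rank w k = r) : orderStat w r = w k := by
  have hex : ∃ k, rank w k = r := ⟨k, h⟩
  rw [orderStat, dif_pos hex, rank_injective hw (hex.choose_spec.trans h.symm)]

lemma lt_orderStat_of_card_filter_le_lt (hw : Function.Injective w) {r : ℕ}
    (hr : r ∈ Icc 1 n) {c : ℝ} (hc : #{x | w x ≤ c} < r) : c < orderStat w r := by
  obtain ⟨k, hk⟩ := exists_rank_eq hw hr
  rw [orderStat_eq_of_rank_eq hw hk]
  by_contra! hkc
  have : r ≤ #{x | w x ≤ c} :=
    hk ▸ card_le_card (monotone_filter_right _ fun _ _ hx => le_trans hx hkc)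
  omega

lemma card_filter_le_sub_lt_rank_add {u : Fin n → ℝ} {L : Finset (Fin n)} {δ : ℝ}
    (huw : ∀ x ∉ L, |u x - w x| < δ) (k : Fin n) :
    #{x | u x ≤ w k - δ} < rank w k + #L := by
  have hsub : ({x | u x ≤ w k - δ} : Finset (Fin n)) ⊆
      ({x | w x < w k} : Finset (Fin n)) ∪ L := by
    simp only [subset_iff, mem_union, mem_filter, mem_univ, true_and]
    intro x hx
    by_contra! hx'
    linarith [(abs_lt.1 (huw x hx'.2)).1]
  calc #{x | u x ≤ w k - δ} ≤ #{x | w x < w k} + #L :=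
        (card_le_card hsub).trans (card_union_le _ _)
    _ < rank w k + #L := Nat.add_lt_add_right (card_filter_lt_lt_rank w k) _

end Rank

theorem stmt_7_general (n : ℕ) (α : ℝ)
    (d ε : ℝ)
    (a : ℤ) (ha : a = ⌊(1 - α) * (n : ℝ) - d⌋)
    (ahat : ℤ) (hahat : ahat = ⌊(a : ℝ) - d⌋)
    (s : ℤ) (hs : s = ⌊(n : ℝ) * (1 - α)⌋)
    (hsn : s ≤ (n : ℤ))
    (w u : Fin n → ℝ)
    (hwinj : Function.Injective w) (huinj : Function.Injective u)
    (L : Finset (Fin n)) (hL : (L.card : ℝ) < d)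
    (h1 : ∀ j ∉ L, |u j - w j| < ε / 2)
    (h2 : ∀ j, (rank w j : ℝ) ≤ (a : ℝ) - d → orderStat w a.toNat - w j ≥ ε) :
    {j | (rank w j : ℝ) ≤ (ahat : ℝ)} \ (L : Set (Fin n))
      ⊆ {j | u j < orderStat u s.toNat} := by
  rintro j ⟨hj, hjL : j ∉ L⟩
  have hrank_j : (rank w j : ℝ) ≤ a - d := hj.trans (hahat ▸ Int.floor_le _)
  have ha_one : 1 ≤ a := by
    have : (1 : ℝ) ≤ rank w j := by exact_mod_cast (mem_Icc.1 (rank_mem_Icc w j)).1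
    have : (1 : ℝ) ≤ a := by linarith [(Nat.cast_nonneg (α := ℝ) L.card).trans_lt hL]
    exact_mod_cast this
  have ha_s : a + L.card < s + 1 := by
    have : (a : ℝ) + L.card < s + 1 := by
      linarith [ha ▸ Int.floor_le ((1 - α) * (n : ℝ) - d),
        hs ▸ Int.lt_floor_add_one ((n : ℝ) * (1 - α))]
    exact_mod_cast this
  obtain ⟨k, hk⟩ := exists_rank_eq hwinj (r := a.toNat) (mem_Icc.2 ⟨by omega, by omega⟩)
  have huj : u j < w k - ε / 2 := by
    have := h2 j hrank_j
    rw [orderStat_eq_of_rank_eq hwinj hk] at this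
    linarith [(abs_lt.1 (h1 j hjL)).2]
  have hcard := card_filter_le_sub_lt_rank_add h1 k
  show u j < orderStat u s.toNat
  exact huj.trans (lt_orderStat_of_card_filter_le_lt huinj (mem_Icc.2 ⟨by omega, by omega⟩)
    (by omega))

/-- Pathwise content of the global filtering inclusion (300217-1): every index selected
by the Brownian rank filter and containing no jump survives the global jump filter. -/
theorem stmt_7 (n : ℕ) (α γ₁ γ₂ : ℝ) (hα : α ∈ Set.Ioo (0 : ℝ) 1)
    (hγ₂ : 0 < γ₂) (hγ₁₂ : γ₂ < γ₁)
    (d ε : ℝ) (hd : d = (n : ℝ) ^ (1 - γ₂)) (hε : ε = (n : ℝ) ^ (-γ₁))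
    (a : ℤ) (ha : a = ⌊(1 - α) * (n : ℝ) - d⌋)
    (ahat : ℤ) (hahat : ahat = ⌊(a : ℝ) - d⌋)
    (s : ℤ) (hs : s = ⌊(n : ℝ) * (1 - α)⌋)
    (ha1 : 1 ≤ a) (han : a ≤ (n : ℤ)) (hs1 : 1 ≤ s) (hsn : s ≤ (n : ℤ))
    (w u : Fin n → ℝ) (hw0 : ∀ j, 0 ≤ w j) (hu0 : ∀ j, 0 ≤ u j)
    (hwinj : Function.Injective w) (huinj : Function.Injective u)
    (L : Finset (Fin n)) (hL : (L.card : ℝ) < d)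
    (h1 : ∀ j ∉ L, |u j - w j| < ε / 2)
    (h2 : ∀ j, (rank w j : ℝ) ≤ (a : ℝ) - d → orderStat w a.toNat - w j ≥ ε) :
    {j | (rank w j : ℝ) ≤ (ahat : ℝ)} \ (L : Set (Fin n))
      ⊆ {j | u j < orderStat u s.toNat} :=
  stmt_7_general n α d ε a ha ahat hahat s hs hsn w u hwinj huinj L hL h1 h2
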